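/- arXiv:2007.08249 — 3 statements merged into one kernel-verified Lean document; each statement's English description precedes it below -/
import Mathlib

section
/- Let φ be a 4×4 antisymmetric complex matrix (indices with Minkowski metric), Λ = exp[(1/2)φ:J] its exponential action on four-vectors, and for a four-vector b define b̃(φ) = Σ_{k=0}^∞ (1/(k+1)!) ((1/2)φ:J)^k (b). Then for every nonnegative integer s, Λ^{-s} b̃(φ) = (1-s)·b̃((1-s)φ) + s·b̃(-sφ). -/
/-!
`b̃(φ) = φ₁(A) b` for `A = (1/2)φ:J`, where `φ₁(z) = (e^z - 1)/z = ∑ zᵏ/(k+1)!`, and the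
identity holds for every element `A` of a Banach algebra and every scalar `s`. In the Cauchy
product of the series of `exp(-sA)` and `φ₁(A)` the coefficient of `Aⁿ` is
`∑_{i+j=n} (-s)ⁱ/(i! (j+1)!)`, which by the binomial theorem is `((1-s)ⁿ⁺¹ - (-s)ⁿ⁺¹)/(n+1)!`,
the coefficient of `Aⁿ` in `(1-s) φ₁((1-s)A) + s φ₁(-sA)`.
-/

noncomputable section

open scoped BigOperators Matrix

/-- Minkowski metric `diag(1,-1,-1,-1)` as a complex matrix. -/
def minkMetric : Matrix (Fin 4) (Fin 4) ℂ := Matrix.diagonal ![1, -1, -1, -1]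

/-- The matrix of `(1/2) φ:J` acting on (raised-index) four-vectors: `x ↦ i η·φ·x`,
so that `((1/2)φ:J)^k (b)` is `i^k` times the `k`-fold matrix product
`φ_{μν₁}φ^{ν₁ν₂}···φ_{ν_{k-1}ν_k} b^{ν_k}`. -/
def halfPhiJ (φ : Matrix (Fin 4) (Fin 4) ℂ) : Matrix (Fin 4) (Fin 4) ℂ :=
  Complex.I • (minkMetric * φ)

/-- `b̃(φ) = Σ_{k=0}^∞ (1/(k+1)!) ((1/2)φ:J)^k (b)`. -/
def tildeB (φ : Matrix (Fin 4) (Fin 4) ℂ) (b : Fin 4 → ℂ) : Fin 4 → ℂ :=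
  ∑' k : ℕ, (((k + 1).factorial : ℂ)⁻¹) • ((halfPhiJ φ ^ k).mulVec b)

open NormedSpace Finset

theorem add_pow_div_factorial {K : Type*} [Field K] [CharZero K] (x y : K) (n : ℕ) :
    (x + y) ^ n / n.factorial
      = ∑ p ∈ antidiagonal n, x ^ p.1 / p.1.factorial * (y ^ p.2 / p.2.factorial) := by
  rw [(Commute.all x y).add_pow', sum_div]
  refine sum_congr rfl fun p hp => ?_
  rw [← mem_antidiagonal.mp hp, nsmul_eq_mul, Nat.cast_add_choose]
  field_simp [Nat.factorial_ne_zero]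

theorem sum_antidiagonal_pow_div_factorial_mul_inv_factorial_succ {K : Type*} [Field K]
    [CharZero K] (x : K) (n : ℕ) :
    ∑ p ∈ antidiagonal n, x ^ p.1 / p.1.factorial * ((p.2 + 1).factorial : K)⁻¹
      = ((x + 1) ^ (n + 1) - x ^ (n + 1)) / (n + 1).factorial := by
  rw [sub_div, add_pow_div_factorial, Finset.Nat.sum_antidiagonal_succ']
  simp [div_eq_mul_inv]

/-- The entire function `φ₁(z) = (exp z - 1) / z` of exponential integrators. -/
def phiOne (𝕂 : Type*) {𝔸 : Type*} [Field 𝕂] [Ring 𝔸] [Algebra 𝕂 𝔸] [TopologicalSpace 𝔸]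
    (a : 𝔸) : 𝔸 :=
  ∑' k : ℕ, ((k + 1).factorial : 𝕂)⁻¹ • a ^ k

section NormedAlgebra

variable {𝕂 𝔸 : Type*} [RCLike 𝕂] [NormedRing 𝔸] [NormedAlgebra 𝕂 𝔸]

theorem norm_phiOne_series_summable (a : 𝔸) :
    Summable fun k : ℕ => ‖((k + 1).factorial : 𝕂)⁻¹ • a ^ k‖ := by
  refine (norm_expSeries_summable' (𝕂 := 𝕂) a).of_nonneg_of_le (fun _ => norm_nonneg _)
    fun k => ?_
  simp only [norm_smul, norm_inv, RCLike.norm_natCast]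
  gcongr
  omega

variable [CompleteSpace 𝔸]

theorem phiOne_series_summable (a : 𝔸) :
    Summable fun k : ℕ => ((k + 1).factorial : 𝕂)⁻¹ • a ^ k :=
  (norm_phiOne_series_summable a).of_norm

theorem exp_neg_smul_mul_phiOne (a : 𝔸) (s : 𝕂) :
    exp (-s • a) * phiOne 𝕂 a = (1 - s) • phiOne 𝕂 ((1 - s) • a) + s • phiOne 𝕂 (-s • a) := by
  rw [exp_eq_tsum 𝕂, phiOne, tsum_mul_tsum_eq_tsum_sum_antidiagonal_of_summable_norm
      (norm_expSeries_summable' _) (norm_phiOne_series_summable a),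
    phiOne, phiOne, ← (phiOne_series_summable _).tsum_const_smul,
    ← (phiOne_series_summable _).tsum_const_smul,
    ← ((phiOne_series_summable _).const_smul _).tsum_add
      ((phiOne_series_summable _).const_smul _)]
  refine tsum_congr fun n => ?_
  have hterm : ∀ p ∈ antidiagonal n,
      ((p.1.factorial : 𝕂)⁻¹ • (-s • a) ^ p.1) * (((p.2 + 1).factorial : 𝕂)⁻¹ • a ^ p.2)
        = ((-s) ^ p.1 / p.1.factorial * ((p.2 + 1).factorial : 𝕂)⁻¹) • a ^ n := by
    intro p hp
    rw [← mem_antidiagonal.mp hp, smul_pow, smul_smul, smul_mul_smul_comm, ← pow_add,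
      div_eq_mul_inv]
    ring_nf
  rw [sum_congr rfl hterm, ← sum_smul, sum_antidiagonal_pow_div_factorial_mul_inv_factorial_succ,
    smul_pow, smul_pow, smul_smul, smul_smul, smul_smul, smul_smul, ← add_smul]
  congr 1
  ring

end NormedAlgebra

theorem Matrix.tsum_mulVec {ι m n R : Type*} [Fintype n] [NonUnitalNonAssocSemiring R]
    [TopologicalSpace R] [ContinuousAdd R] [ContinuousMul R] [T2Space R]
    {M : ι → Matrix m n R} (hM : Summable M) (v : n → R) : (∑' k, M k) *ᵥ v = ∑' k, M k *ᵥ v :=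
  hM.map_tsum (Matrix.mulVec.addMonoidHomLeft v) (continuous_id.matrix_mulVec continuous_const)

theorem halfPhiJ_smul (c : ℂ) (φ : Matrix (Fin 4) (Fin 4) ℂ) :
    halfPhiJ (c • φ) = c • halfPhiJ φ := by
  rw [halfPhiJ, halfPhiJ, Matrix.mul_smul, smul_comm]

section Matrix

variable {n 𝕂 : Type*} [Fintype n] [DecidableEq n] [RCLike 𝕂]

-- Any norm inducing the product topology serves: the statements below involve only the topology.
attribute [local instance] Matrix.linftyOpNormedRing Matrix.linftyOpNormedAlgebra

theorem Matrix.phiOne_series_summable (A : Matrix n n 𝕂) :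
    Summable fun k : ℕ => ((k + 1).factorial : 𝕂)⁻¹ • A ^ k :=
  _root_.phiOne_series_summable A

theorem Matrix.exp_neg_smul_mul_phiOne (A : Matrix n n 𝕂) (s : 𝕂) :
    exp (-s • A) * phiOne 𝕂 A
      = (1 - s) • phiOne 𝕂 ((1 - s) • A) + s • phiOne 𝕂 (-s • A) :=
  _root_.exp_neg_smul_mul_phiOne A s

end Matrix

theorem tildeB_eq_phiOne_mulVec (φ : Matrix (Fin 4) (Fin 4) ℂ) (b : Fin 4 → ℂ) :
    tildeB φ b = phiOne ℂ (halfPhiJ φ) *ᵥ b := by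
  rw [phiOne, Matrix.tsum_mulVec (Matrix.phiOne_series_summable (halfPhiJ φ))]
  simp only [tildeB, Matrix.smul_mulVec]

theorem stmt1_general (φ : Matrix (Fin 4) (Fin 4) ℂ) (b : Fin 4 → ℂ) (s : ℕ) :
    (NormedSpace.exp ((-(s : ℂ)) • halfPhiJ φ)).mulVec (tildeB φ b)
      = (1 - (s : ℂ)) • tildeB ((1 - (s : ℂ)) • φ) b
        + (s : ℂ) • tildeB ((-(s : ℂ)) • φ) b := by
  simp only [tildeB_eq_phiOne_mulVec, halfPhiJ_smul, Matrix.mulVec_mulVec,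
    Matrix.exp_neg_smul_mul_phiOne, Matrix.add_mulVec, Matrix.smul_mulVec]

/-- the recurrence `Λ^{-s} b̃(φ) = (1-s)·b̃((1-s)φ) + s·b̃(-sφ)`,
where `Λ = exp[(1/2)φ:J]`. -/
theorem stmt1 (φ : Matrix (Fin 4) (Fin 4) ℂ) (hφ : φᵀ = -φ) (b : Fin 4 → ℂ) (s : ℕ) :
    (NormedSpace.exp ((-(s : ℂ)) • halfPhiJ φ)).mulVec (tildeB φ b)
      = (1 - (s : ℂ)) • tildeB ((1 - (s : ℂ)) • φ) b
        + (s : ℂ) • tildeB ((-(s : ℂ)) • φ) b :=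
  stmt1_general φ b s

end
end

section
/- For every positive integer m, the generalized Bernoulli polynomial of order 2m+1 and degree 2m vanishes at m: B^{(2m+1)}_{2m}(m) = 0. -/
/-!
Write `u = x / (eˣ - 1)`. Differentiating `(eˣ - 1) u = x` gives `x u' = u - eˣ u²`,
hence `x (uⁿ)' = n (uⁿ - eˣ uⁿ⁺¹)`; comparing coefficients of `xⁿ` shows that `eˣ uⁿ⁺¹`
has no `xⁿ` term when `n ≥ 1`. For `1 ≤ t ≤ n`, expanding `e^{tx} = eˣ (1 + x/u)^{t-1}`
binomially writes `uⁿ⁺¹ e^{tx}` as a combination of `xᵏ eˣ uⁿ⁺¹⁻ᵏ` with `k < n`, none of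
which has an `xⁿ` term; so `B^{(n+1)}_n(t) = 0`.
-/

noncomputable section

/-- The generalized Bernoulli polynomial `B^{(α)}_n(t)`, defined by the generating
function `(x/(eˣ-1))^α e^{tx} = Σ_n B^{(α)}_n(t) xⁿ/n!`. -/
def genBernoulli (α n : ℕ) (t : ℝ) : ℝ :=
  (n.factorial : ℝ) *
    PowerSeries.coeff n
      (((PowerSeries.mk fun k => (1 : ℝ) / (k + 1).factorial)⁻¹) ^ α *
        PowerSeries.rescale t (PowerSeries.exp ℝ))

namespace PowerSeries

variable (K : Type*) [Field K]

def expSubOneDivX : K⟦X⟧ := mk fun k => 1 / (k + 1).factorial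

variable {K}

theorem constantCoeff_expSubOneDivX : constantCoeff (expSubOneDivX K) = 1 := by
  simp [expSubOneDivX, ← coeff_zero_eq_constantCoeff_apply]

theorem expSubOneDivX_mul_inv : expSubOneDivX K * (expSubOneDivX K)⁻¹ = 1 :=
  PowerSeries.mul_inv_cancel _ (by simp [constantCoeff_expSubOneDivX])

variable [CharZero K]

theorem X_mul_expSubOneDivX : X * expSubOneDivX K = exp K - 1 := by
  ext (_ | n)
  · simp
  · simp [expSubOneDivX, coeff_succ_X_mul, coeff_exp]

theorem X_mul_derivative_expSubOneDivX :
    X * d⁄dX K (expSubOneDivX K) = exp K - expSubOneDivX K := by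
  have h := congrArg (d⁄dX K) (X_mul_expSubOneDivX (K := K))
  simp only [Derivation.leibniz, derivative_X, smul_eq_mul, map_sub, derivative_exp,
    Derivation.map_one_eq_zero] at h
  linear_combination h

theorem X_mul_derivative_inv_expSubOneDivX :
    X * d⁄dX K (expSubOneDivX K)⁻¹ =
      (expSubOneDivX K)⁻¹ - exp K * (expSubOneDivX K)⁻¹ ^ 2 := by
  rw [derivative_inv']
  linear_combination (-(expSubOneDivX K)⁻¹ ^ 2) * X_mul_derivative_expSubOneDivX (K := K)
    + (expSubOneDivX K)⁻¹ * expSubOneDivX_mul_inv (K := K)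

theorem X_mul_derivative_inv_expSubOneDivX_pow (n : ℕ) :
    X * d⁄dX K ((expSubOneDivX K)⁻¹ ^ n) =
      (n : K⟦X⟧) * ((expSubOneDivX K)⁻¹ ^ n - exp K * (expSubOneDivX K)⁻¹ ^ (n + 1)) := by
  rcases n with _ | n
  · simp
  · rw [Derivation.leibniz_pow]
    simp only [nsmul_eq_mul, smul_eq_mul, Nat.add_sub_cancel]
    push_cast
    linear_combination ((n + 1 : K⟦X⟧) * (expSubOneDivX K)⁻¹ ^ n) *
      X_mul_derivative_inv_expSubOneDivX (K := K)

theorem coeff_exp_mul_inv_expSubOneDivX_pow_succ {n : ℕ} (hn : n ≠ 0) :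
    coeff n (exp K * (expSubOneDivX K)⁻¹ ^ (n + 1)) = 0 := by
  obtain ⟨k, rfl⟩ := Nat.exists_eq_add_one_of_ne_zero hn
  have h := congrArg (coeff (k + 1)) (X_mul_derivative_inv_expSubOneDivX_pow (K := K) (k + 1))
  rw [coeff_succ_X_mul, coeff_derivative, ← map_natCast (C (R := K)), coeff_C_mul, map_sub] at h
  push_cast at h
  have hk : (k + 1 : K) ≠ 0 := k.cast_add_one_ne_zero
  exact (mul_eq_zero.mp (by linear_combination h)).resolve_left hk

theorem coeff_exp_mul_inv_expSubOneDivX_pow_mul_X_mul_pow {n k : ℕ} (hk : k < n) :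
    coeff n (exp K * (expSubOneDivX K)⁻¹ ^ (n + 1) * (X * expSubOneDivX K) ^ k) = 0 := by
  obtain ⟨d, rfl⟩ := Nat.exists_eq_add_of_le hk.le
  have h : exp K * (expSubOneDivX K)⁻¹ ^ (k + d + 1) * (X * expSubOneDivX K) ^ k =
      X ^ k * (exp K * (expSubOneDivX K)⁻¹ ^ (d + 1)) := by
    have hpow : expSubOneDivX K ^ k * (expSubOneDivX K)⁻¹ ^ k = 1 := by
      rw [← mul_pow, expSubOneDivX_mul_inv, one_pow]
    linear_combination (X ^ k * exp K * (expSubOneDivX K)⁻¹ ^ (d + 1)) * hpow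
  rw [h, add_comm, coeff_X_pow_mul]
  exact coeff_exp_mul_inv_expSubOneDivX_pow_succ (by omega)

theorem coeff_inv_expSubOneDivX_pow_mul_rescale_exp {n t : ℕ} (ht₀ : t ≠ 0) (htn : t ≤ n) :
    coeff n ((expSubOneDivX K)⁻¹ ^ (n + 1) * rescale (t : K) (exp K)) = 0 := by
  obtain ⟨s, rfl⟩ := Nat.exists_eq_add_one_of_ne_zero ht₀
  have hexp : exp K ^ s =
      ∑ k ∈ Finset.range (s + 1), C (s.choose k : K) * (X * expSubOneDivX K) ^ k := by
    rw [show exp K = X * expSubOneDivX K + 1 by rw [X_mul_expSubOneDivX]; ring, add_pow]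
    simp [mul_comm]
  rw [← exp_pow_eq_rescale_exp, pow_succ' (exp K), hexp, Finset.mul_sum, Finset.mul_sum, map_sum]
  refine Finset.sum_eq_zero fun k hk => ?_
  have hkn : k < n := by have := Finset.mem_range.mp hk; omega
  rw [mul_left_comm (exp K), mul_left_comm, coeff_C_mul, ← mul_assoc, mul_comm _ (exp K),
    coeff_exp_mul_inv_expSubOneDivX_pow_mul_X_mul_pow hkn, mul_zero]

end PowerSeries

theorem genBernoulli_succ_self_eq_zero {n t : ℕ} (ht₀ : t ≠ 0) (htn : t ≤ n) :
    genBernoulli (n + 1) n t = 0 :=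
  mul_eq_zero_of_right _ (PowerSeries.coeff_inv_expSubOneDivX_pow_mul_rescale_exp ht₀ htn)

/-- for every positive integer `m`, the generalized Bernoulli
polynomial of order `2m+1` and degree `2m` vanishes at `m`: `B^{(2m+1)}_{2m}(m) = 0`. -/
theorem stmt10 (m : ℕ) (hm : 0 < m) :
    genBernoulli (2 * m + 1) (2 * m) (m : ℝ) = 0 :=
  genBernoulli_succ_self_eq_zero hm.ne' (by omega)
end
end

section
/- For every integer m ≥ 0, the polynomial 𝓑_{2m+2}(φ) = -2^{2m+1} Σ_{k=0}^{m+1} (2πi)^{2k} (B_{2k}/(2k)!) (B^{(2m+2)}_{2m+2-2k}(m+1)/(2m+2-2k)!) φ^{2m+2-2k} vanishes at φ = 2πi and at φ = -2πi. -/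
noncomputable section

open scoped BigOperators

/-- The generalized Bernoulli polynomial `B^{(α)}_n(t)` (with complex argument),
defined by `(x/(eˣ-1))^α e^{tx} = Σ_n B^{(α)}_n(t) xⁿ/n!`. -/
def genBernoulliC (α n : ℕ) (t : ℂ) : ℂ :=
  (n.factorial : ℂ) *
    PowerSeries.coeff n
      (((PowerSeries.mk fun k => (1 : ℂ) / (k + 1).factorial)⁻¹) ^ α *
        PowerSeries.rescale t (PowerSeries.exp ℂ))

/-- The polynomial `𝓑_{2m+2}(φ) = -2^{2m+1} Σ_{k=0}^{m+1} (2πi)^{2k} (B_{2k}/(2k)!)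
(B^{(2m+2)}_{2m+2-2k}(m+1)/(2m+2-2k)!) φ^{2m+2-2k}`. -/
def distPoly (m : ℕ) (φ : ℂ) : ℂ :=
  -(2 : ℂ) ^ (2 * m + 1) *
    ∑ k ∈ Finset.range (m + 2),
      (2 * Real.pi * Complex.I) ^ (2 * k) * ((bernoulli (2 * k) : ℂ) / ((2 * k).factorial : ℂ))
        * (genBernoulliC (2 * m + 2) (2 * m + 2 - 2 * k) ((m : ℂ) + 1)
            / ((2 * m + 2 - 2 * k).factorial : ℂ))
        * φ ^ (2 * m + 2 - 2 * k)


/-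
Let `f = x/(eˣ-1)`, so that `B^{(2m+2)}_n(m+1)/n!` is the `xⁿ`-coefficient of
`G = f^{2m+2} e^{(m+1)x} = (x / (2 sinh (x/2)))^{2m+2}`. Both points `φ = ±2πi` turn every
summand of `𝓑_{2m+2}(φ)` into `φ^{2m+2}` times the summand of `Σ_k [x^{2k}] f · [x^{2m+2-2k}] G`.
Since `G` is even, the odd-indexed terms of the Cauchy product `f G` vanish, so this sum is the
full coefficient `[x^{2m+2}] (f G) = [x^{2m+2}] f^{2m+3} e^{(m+1)x}`, the residue at `0` of
`e^{(m+1)x}/(eˣ-1)^{2m+3}`. Expanding `e^{(m+1)x} = eˣ (1 + (eˣ-1))^m` reduces it to the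
coefficients `[xⁿ] eˣ f^{n+1}` with `n ≥ m+2`, which vanish: from `x f' = f - eˣ f²` one gets
`x (fⁿ)' = n (fⁿ - eˣ f^{n+1})`, and comparing `xⁿ`-coefficients leaves `n [xⁿ] eˣ f^{n+1} = 0`.
-/

open PowerSeries Finset

theorem Finset.sum_range_two_mul_add_one {M : Type*} [AddCommMonoid M] (a : ℕ → M) (n : ℕ) :
    ∑ j ∈ range (2 * n + 1), a j =
      ∑ k ∈ range (n + 1), a (2 * k) + ∑ k ∈ range n, a (2 * k + 1) := by
  induction n with
  | zero => simp
  | succ n ih =>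
    rw [show 2 * (n + 1) + 1 = 2 * n + 1 + 1 + 1 by ring, sum_range_succ, sum_range_succ, ih,
      sum_range_succ (fun k => a (2 * k)) (n + 1), sum_range_succ (fun k => a (2 * k + 1)) n,
      show 2 * n + 1 + 1 = 2 * (n + 1) by ring]
    abel

namespace PowerSeries

variable {A : Type*} [CommRing A] [Algebra ℚ A]

theorem coeff_eq_zero_of_evalNegHom_eq_self {f : A⟦X⟧} (hf : evalNegHom f = f) {n : ℕ}
    (hn : Odd n) : coeff n f = 0 := by
  have h := congrArg (coeff n) hf
  rw [evalNegHom, coeff_rescale, hn.neg_one_pow, neg_one_mul] at h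
  have : IsAddTorsionFree A := .of_module_rat A
  exact self_eq_neg.mp h.symm

theorem coeff_two_mul_mul_of_evalNegHom_eq_self (f : A⟦X⟧) {g : A⟦X⟧} (hg : evalNegHom g = g)
    (n : ℕ) :
    coeff (2 * n) (f * g) = ∑ k ∈ range (n + 1), coeff (2 * k) f * coeff (2 * n - 2 * k) g := by
  rw [coeff_mul, Nat.sum_antidiagonal_eq_sum_range_succ (fun i j => coeff i f * coeff j g),
    Nat.succ_eq_add_one, sum_range_two_mul_add_one, add_eq_left]
  refine sum_eq_zero fun k hk => ?_
  have hodd : Odd (2 * n - (2 * k + 1)) := ⟨n - k - 1, by grind⟩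
  rw [coeff_eq_zero_of_evalNegHom_eq_self hg hodd, mul_zero]

theorem eq_of_mul_exp_sub_one_eq_mul_exp_sub_one {f g : A⟦X⟧}
    (h : f * (exp A - 1) = g * (exp A - 1)) : f = g := by
  refine mul_X_cancel ?_
  rw [← bernoulliPowerSeries_mul_exp_sub_one A, mul_left_comm, h, mul_left_comm]

theorem evalNegHom_bernoulliPowerSeries :
    evalNegHom (bernoulliPowerSeries A) = exp A * bernoulliPowerSeries A := by
  refine eq_of_mul_exp_sub_one_eq_mul_exp_sub_one ?_
  have h := congrArg evalNegHom (bernoulliPowerSeries_mul_exp_sub_one A)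
  rw [map_mul, map_sub, map_one, evalNegHom_X] at h
  rw [mul_assoc, bernoulliPowerSeries_mul_exp_sub_one]
  linear_combination evalNegHom (bernoulliPowerSeries A) * exp_mul_exp_neg_eq_one (A := A)
    - exp A * h

theorem evalNegHom_bernoulliPowerSeries_sq_mul_exp :
    evalNegHom (bernoulliPowerSeries A ^ 2 * exp A) = bernoulliPowerSeries A ^ 2 * exp A := by
  rw [map_mul, map_pow, evalNegHom_bernoulliPowerSeries]
  linear_combination bernoulliPowerSeries A ^ 2 * exp A * (exp_mul_exp_neg_eq_one (A := A))

theorem X_mul_derivative_bernoulliPowerSeries :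
    X * d⁄dX A (bernoulliPowerSeries A) =
      bernoulliPowerSeries A - exp A * bernoulliPowerSeries A ^ 2 := by
  have h := congrArg (d⁄dX A) (bernoulliPowerSeries_mul_exp_sub_one A)
  rw [Derivation.leibniz, map_sub, Derivation.map_one_eq_zero, derivative_exp, derivative_X,
    sub_zero, smul_eq_mul, smul_eq_mul] at h
  linear_combination (bernoulliPowerSeries A) * h
    - d⁄dX A (bernoulliPowerSeries A) * bernoulliPowerSeries_mul_exp_sub_one A

theorem coeff_exp_mul_bernoulliPowerSeries_pow {n : ℕ} (hn : n ≠ 0) :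
    coeff n (exp A * bernoulliPowerSeries A ^ (n + 1)) = 0 := by
  obtain ⟨k, rfl⟩ := Nat.exists_eq_succ_of_ne_zero hn
  set B := bernoulliPowerSeries A
  have hD : X * d⁄dX A (B ^ (k + 1)) = (k + 1) • (B ^ (k + 1) - exp A * B ^ (k + 2)) := by
    rw [Derivation.leibniz_pow, Nat.add_sub_cancel, smul_eq_mul, mul_smul_comm, mul_left_comm,
      X_mul_derivative_bernoulliPowerSeries]
    congr 1
    ring
  have h := congrArg (coeff (k + 1)) hD
  rw [coeff_succ_X_mul, coeff_derivative, map_nsmul, map_sub, ← Nat.cast_succ, mul_comm,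
    ← nsmul_eq_mul, ← sub_eq_zero, ← smul_sub, sub_sub_cancel] at h
  have : IsAddTorsionFree A := .of_module_rat A
  exact (nsmul_eq_zero_iff.mp h).resolve_right (Nat.succ_ne_zero k)

theorem bernoulliPowerSeries_pow_mul_exp_sub_one_pow {i N : ℕ} (h : i ≤ N) :
    bernoulliPowerSeries A ^ N * (exp A - 1) ^ i = X ^ i * bernoulliPowerSeries A ^ (N - i) := by
  rw [← Nat.sub_add_cancel h, pow_add, Nat.add_sub_cancel, mul_assoc, ← mul_pow,
    bernoulliPowerSeries_mul_exp_sub_one, mul_comm]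

theorem coeff_bernoulliPowerSeries_pow_mul_exp_pow {N j : ℕ} (hj : 0 < j) (hjN : j ≤ N) :
    coeff N (bernoulliPowerSeries A ^ (N + 1) * exp A ^ j) = 0 := by
  obtain ⟨l, rfl⟩ := Nat.exists_eq_succ_of_ne_zero hj.ne'
  have hexp : exp A ^ (l + 1) =
      ∑ i ∈ range (l + 1), (l.choose i : A⟦X⟧) * (exp A * (exp A - 1) ^ i) := by
    rw [pow_succ', ← sub_add_cancel (exp A) 1, add_pow, sub_add_cancel, mul_sum]
    refine sum_congr rfl fun i _ => ?_
    rw [one_pow, mul_one]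
    ring
  rw [hexp, mul_sum, map_sum]
  refine sum_eq_zero fun i hi => ?_
  have hiN : i < N := by grind
  have hterm :
      (l.choose i : A⟦X⟧) * (exp A * (bernoulliPowerSeries A ^ (N + 1) * (exp A - 1) ^ i)) =
        C (l.choose i : A) * (X ^ i * (exp A * bernoulliPowerSeries A ^ (N - i + 1))) := by
    rw [bernoulliPowerSeries_pow_mul_exp_sub_one_pow (by omega),
      show N + 1 - i = N - i + 1 by omega, map_natCast]
    ring
  rw [mul_left_comm, mul_left_comm _ (exp A), hterm, coeff_C_mul, coeff_X_pow_mul', if_pos hiN.le,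
    coeff_exp_mul_bernoulliPowerSeries_pow (by omega), mul_zero]

theorem sum_coeff_bernoulliPowerSeries_mul_coeff_eq_zero (m : ℕ) :
    ∑ k ∈ range (m + 2), coeff (2 * k) (bernoulliPowerSeries A) *
      coeff (2 * m + 2 - 2 * k) (bernoulliPowerSeries A ^ (2 * m + 2) * exp A ^ (m + 1)) = 0 := by
  have hG : bernoulliPowerSeries A ^ (2 * m + 2) * exp A ^ (m + 1) =
      (bernoulliPowerSeries A ^ 2 * exp A) ^ (m + 1) := by ring
  have hG_even : evalNegHom ((bernoulliPowerSeries A ^ 2 * exp A) ^ (m + 1)) =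
      (bernoulliPowerSeries A ^ 2 * exp A) ^ (m + 1) := by
    rw [map_pow, evalNegHom_bernoulliPowerSeries_sq_mul_exp]
  rw [hG, show 2 * m + 2 = 2 * (m + 1) by ring,
    ← coeff_two_mul_mul_of_evalNegHom_eq_self _ hG_even, ← hG, ← mul_assoc, ← pow_succ']
  exact coeff_bernoulliPowerSeries_pow_mul_exp_pow (N := 2 * m + 2) (by omega) (by omega)

section Field

variable {K : Type*} [Field K] [CharZero K]

theorem mk_one_div_factorial_succ_mul_X :
    (mk fun k => (1 : K) / (k + 1).factorial) * X = exp K - 1 := by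
  ext n
  cases n with
  | zero => simp
  | succ n => simp [coeff_exp]

theorem inv_mk_one_div_factorial_succ :
    (mk fun k => (1 : K) / (k + 1).factorial)⁻¹ = bernoulliPowerSeries K := by
  refine ((eq_inv_iff_mul_eq_one (by simp)).mpr (mul_X_cancel ?_)).symm
  rw [mul_assoc, mk_one_div_factorial_succ_mul_X, bernoulliPowerSeries_mul_exp_sub_one, one_mul]

end Field

end PowerSeries

theorem genBernoulliC_div_factorial (α n : ℕ) (t : ℂ) :
    genBernoulliC α n t / n.factorial =
      coeff n (bernoulliPowerSeries ℂ ^ α * rescale t (exp ℂ)) := by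
  rw [genBernoulliC, inv_mk_one_div_factorial_succ,
    mul_div_cancel_left₀ _ (Nat.cast_ne_zero.mpr n.factorial_ne_zero)]

theorem distPoly_eq_zero_of_sq_eq {m : ℕ} {φ : ℂ}
    (hφ : φ ^ 2 = (2 * Real.pi * Complex.I) ^ 2) :
    distPoly m φ = 0 := by
  have hterm : ∀ k ∈ range (m + 2),
      (2 * Real.pi * Complex.I) ^ (2 * k) * ((bernoulli (2 * k) : ℂ) / ((2 * k).factorial : ℂ))
        * (genBernoulliC (2 * m + 2) (2 * m + 2 - 2 * k) ((m : ℂ) + 1)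
            / ((2 * m + 2 - 2 * k).factorial : ℂ)) * φ ^ (2 * m + 2 - 2 * k)
      = φ ^ (2 * m + 2) * (coeff (2 * k) (bernoulliPowerSeries ℂ) *
          coeff (2 * m + 2 - 2 * k) (bernoulliPowerSeries ℂ ^ (2 * m + 2) * exp ℂ ^ (m + 1))) := by
    intro k hk_mem
    have hk : 2 * k ≤ 2 * m + 2 := by grind
    rw [pow_mul, ← hφ, ← pow_mul, genBernoulliC_div_factorial, exp_pow_eq_rescale_exp]
    have hB : coeff (2 * k) (bernoulliPowerSeries ℂ) = bernoulli (2 * k) / (2 * k).factorial := by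
      simp [bernoulliPowerSeries]
    have hφ_pow : φ ^ (2 * m + 2) = φ ^ (2 * k) * φ ^ (2 * m + 2 - 2 * k) := by
      rw [← pow_add, Nat.add_sub_cancel' hk]
    rw [hB, Nat.cast_succ, hφ_pow]
    ring
  rw [distPoly, sum_congr rfl hterm, ← mul_sum, sum_coeff_bernoulliPowerSeries_mul_coeff_eq_zero,
    mul_zero, mul_zero]

/-- for every `m ≥ 0`, the polynomial `𝓑_{2m+2}` vanishes at `φ = ±2πi`. -/
theorem stmt12 (m : ℕ) :
    distPoly m (2 * Real.pi * Complex.I) = 0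
      ∧ distPoly m (-(2 * Real.pi * Complex.I)) = 0 :=
  ⟨distPoly_eq_zero_of_sq_eq rfl, distPoly_eq_zero_of_sq_eq (neg_sq _)⟩
end
end
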